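/- Let b, c, d, e, g be real (or complex) parameters with e and g not nonpositive integers. Then the double series ∑_{m,n≥0} (b)_m (c)_m (d)_n / ((e)_{m+n} (g)_n m! n!) · x^m y^n defining F^{0;2;1}_{1;0;1}[-: b,c; d; e: -; g; x,y] converges absolutely for every x with |x| < 1 and every y (i.e. the region of convergence is |x| < 1, |y| < ∞, in accordance with the conditions p+q < l+m+1 failing but p+q = l+m+1 with p+k < l+n+1 for p=0, q=2, k=1, l=1, m=0, n=1). -/

import Mathlib

/-!
Split the summand as
`(b)_m/m! · (c)_m/m! · (d)_n/n! · (m+n)!/(e)_{m+n} · n!/(g)_n · m!/(m+n)! · x^m y^n/n!`.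
The first five factors grow at most polynomially: `|(a)_k| ≤ k! (k+1)^A` for `|a| ≤ A`, and,
since `(e)_k = (e)_N (e+N)_{k-N}` with `e + N ≥ 1` and `(e)_N ≠ 0`, also `k!/|(e)_k| = O((k+1)^N)`.
As `m! ≤ (m+n)!`, the summand is dominated by `(m+1)^P |x|^m · (n+1)^Q |y|^n / n!`, a product
of a summable series in `m` (because `|x| < 1`) and one in `n` (for every `y`).
-/

noncomputable section

/-- The Pochhammer symbol `(a)_k = a (a+1) ⋯ (a+k-1)`. -/
def poch (a : ℝ) (k : ℕ) : ℝ := ∏ i ∈ Finset.range k, (a + i)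

open Finset Nat Asymptotics Filter

lemma poch_succ (a : ℝ) (k : ℕ) : poch a (k + 1) = poch a k * (a + k) :=
  prod_range_succ _ _

lemma poch_add (a : ℝ) (m n : ℕ) : poch a (m + n) = poch a m * poch (a + m) n := by
  simp only [poch, prod_range_add, cast_add, add_assoc]

lemma poch_ne_zero {a : ℝ} (ha : ∀ k : ℕ, a ≠ -(k : ℝ)) (k : ℕ) : poch a k ≠ 0 :=
  prod_ne_zero_iff.2 fun i _ h => ha i (eq_neg_of_add_eq_zero_left h)

lemma abs_poch_le_poch_of_abs_le {a A : ℝ} (ha : |a| ≤ A) (k : ℕ) : |poch a k| ≤ poch A k := by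
  rw [poch, abs_prod]
  exact prod_le_prod (fun _ _ => abs_nonneg _) fun i _ =>
    (abs_add_le _ _).trans (by rw [Nat.abs_cast]; linarith)

lemma factorial_le_poch {a : ℝ} (ha : 1 ≤ a) (k : ℕ) : (k ! : ℝ) ≤ poch a k := by
  rw [← prod_range_add_one_eq_factorial, cast_prod, poch]
  exact prod_le_prod (fun _ _ => by positivity) fun i _ => by push_cast; linarith

-- Bernoulli's inequality `1 + A/t ≤ (1 + 1/t)^A`, cleared of denominators.
lemma pow_mul_add_le_mul_add_one_pow {t : ℝ} (ht : 0 ≤ t) (A : ℕ) :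
    t ^ A * (t + A) ≤ t * (t + 1) ^ A := by
  induction A with
  | zero => simp
  | succ A ih =>
    have hA : t * (t + (A + 1)) ≤ (t + 1) * (t + A) := by nlinarith
    calc t ^ (A + 1) * (t + ↑(A + 1)) = t ^ A * (t * (t + (A + 1))) := by push_cast; ring
      _ ≤ t ^ A * ((t + 1) * (t + A)) := by gcongr
      _ = (t + 1) * (t ^ A * (t + A)) := by ring
      _ ≤ (t + 1) * (t * (t + 1) ^ A) := by gcongr
      _ = t * (t + 1) ^ (A + 1) := by ring

lemma poch_natCast_le (A k : ℕ) : poch A k ≤ k ! * ((k : ℝ) + 1) ^ A := by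
  induction k with
  | zero => simp [poch]
  | succ k ih =>
    have key := pow_mul_add_le_mul_add_one_pow (t := (k : ℝ) + 1) (by positivity) A
    calc poch A (k + 1) = poch A k * (A + k) := poch_succ _ _
      _ ≤ k ! * ((k : ℝ) + 1) ^ A * (A + k) := by gcongr
      _ ≤ k ! * (((k : ℝ) + 1) ^ A * ((k + 1) + A)) := by
        rw [mul_assoc]; gcongr _ * (_ * ?_); linarith
      _ ≤ k ! * (((k : ℝ) + 1) * ((k + 1) + 1) ^ A) := by gcongr
      _ = (k + 1)! * (((k + 1 : ℕ) : ℝ) + 1) ^ A := by push_cast [factorial_succ]; ring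

lemma abs_poch_div_factorial_le {a : ℝ} {A : ℕ} (ha : |a| ≤ A) (k : ℕ) :
    |poch a k / k !| ≤ ((k : ℝ) + 1) ^ A := by
  rw [abs_div, abs_of_pos (by positivity : (0 : ℝ) < k !), div_le_iff₀' (by positivity)]
  exact (abs_poch_le_poch_of_abs_le ha k).trans (poch_natCast_le A k)

lemma factorial_add_le (N j : ℕ) : (N + j)! ≤ j ! * (N + j) ^ N := by
  rw [add_comm N j, ← factorial_mul_ascFactorial]
  exact Nat.mul_le_mul_left _ (ascFactorial_le_pow_add j N)

lemma isBigO_factorial_div_poch {e : ℝ} (he : ∀ k : ℕ, e ≠ -(k : ℝ)) :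
    ∃ N : ℕ, (fun k => (k ! : ℝ) / poch e k) =O[atTop] fun k => ((k : ℝ) + 1) ^ N := by
  set N := ⌈1 - e⌉₊
  have heN : 1 ≤ e + N := by linarith [le_ceil (1 - e)]
  have hpN : 0 < |poch e N| := abs_pos.2 (poch_ne_zero he N)
  refine ⟨N, IsBigO.of_bound |poch e N|⁻¹ (eventually_atTop.2 ⟨N, fun k hk => ?_⟩)⟩
  obtain ⟨j, rfl⟩ := exists_add_of_le hk
  have hfac : ((N + j)! : ℝ) ≤ poch (e + N) j * (((N + j : ℕ) : ℝ) + 1) ^ N :=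
    calc ((N + j)! : ℝ) ≤ j ! * ((N + j : ℕ) : ℝ) ^ N := by exact_mod_cast factorial_add_le N j
      _ ≤ poch (e + N) j * (((N + j : ℕ) : ℝ) + 1) ^ N := by
        gcongr
        · exact (cast_nonneg _).trans (factorial_le_poch heN j)
        · exact factorial_le_poch heN j
        · linarith
  have hpos : 0 < poch (e + N) j :=
    (cast_pos.2 (factorial_pos j)).trans_le (factorial_le_poch heN j)
  rw [norm_div, Real.norm_natCast, Real.norm_eq_abs, poch_add, abs_mul, abs_of_pos hpos,
    norm_pow, Real.norm_of_nonneg (by positivity), div_le_iff₀ (by positivity)]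
  exact hfac.trans_eq (by field_simp)

lemma exists_abs_factorial_div_poch_le {e : ℝ} (he : ∀ k : ℕ, e ≠ -(k : ℝ)) :
    ∃ C : ℝ, ∃ N : ℕ, ∀ k : ℕ, |(k ! : ℝ) / poch e k| ≤ C * ((k : ℝ) + 1) ^ N := by
  obtain ⟨N, hN⟩ := isBigO_factorial_div_poch he
  obtain ⟨C, hC⟩ := (isBigO_nat_atTop_iff fun k hk => absurd hk (by positivity)).1 hN
  refine ⟨C, N, fun k => ?_⟩
  simpa only [Real.norm_eq_abs, abs_pow, abs_of_pos (by positivity : (0 : ℝ) < k + 1)]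
    using hC k

lemma summable_add_one_pow_mul_geometric (P : ℕ) {r : ℝ} (hr : |r| < 1) :
    Summable fun k : ℕ => ((k : ℝ) + 1) ^ P * r ^ k := by
  simp_rw [add_pow, one_pow, mul_one, sum_mul]
  exact summable_sum fun i _ => by
    simpa [mul_right_comm] using
      (summable_pow_mul_geometric_of_norm_lt_one i (by rwa [Real.norm_eq_abs])).mul_right
        (P.choose i : ℝ)

lemma summable_add_one_pow_mul_pow_div_factorial (Q : ℕ) {t : ℝ} (ht : 0 ≤ t) :
    Summable fun k : ℕ => ((k : ℝ) + 1) ^ Q * t ^ k / k ! := by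
  refine (Real.summable_pow_div_factorial (2 ^ Q * t)).of_nonneg_of_le
    (fun k => by positivity) fun k => ?_
  have hk : (k : ℝ) + 1 ≤ 2 ^ k := by exact_mod_cast Nat.lt_two_pow_self
  calc ((k : ℝ) + 1) ^ Q * t ^ k / k ! ≤ ((2 : ℝ) ^ k) ^ Q * t ^ k / k ! := by gcongr
    _ = (2 ^ Q * t) ^ k / k ! := by rw [mul_pow, ← pow_mul, ← pow_mul, mul_comm k]

lemma abs_F021_summand_le {b c d e g x y : ℝ} {B C D E G : ℕ} {Ce Cg : ℝ}
    (hb : |b| ≤ B) (hc : |c| ≤ C) (hd : |d| ≤ D)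
    (he : ∀ k : ℕ, |(k ! : ℝ) / poch e k| ≤ Ce * ((k : ℝ) + 1) ^ E)
    (hg : ∀ k : ℕ, |(k ! : ℝ) / poch g k| ≤ Cg * ((k : ℝ) + 1) ^ G) (m n : ℕ) :
    |poch b m * poch c m * poch d n / (poch e (m + n) * poch g n * m ! * n !) * x ^ m * y ^ n|
      ≤ Ce * Cg * (((m : ℝ) + 1) ^ (B + C + E) * |x| ^ m) *
        (((n : ℝ) + 1) ^ (D + G + E) * |y| ^ n / n !) := by
  have hCe : 0 ≤ Ce := by simpa using (abs_nonneg _).trans (he 0)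
  have hCg : 0 ≤ Cg := by simpa using (abs_nonneg _).trans (hg 0)
  have hfac : (m ! : ℝ) / (m + n)! ≤ 1 :=
    div_le_one_of_le₀ (by exact_mod_cast factorial_le (le_add_right m n)) (by positivity)
  have hmn : ((m + n : ℕ) : ℝ) + 1 ≤ ((m : ℝ) + 1) * ((n : ℝ) + 1) := by push_cast; nlinarith
  have hsplit : poch b m * poch c m * poch d n / (poch e (m + n) * poch g n * m ! * n !) =
      poch b m / m ! * (poch c m / m !) * (poch d n / n !) * ((m + n)! / poch e (m + n)) *
        (n ! / poch g n) * (m ! / (m + n)!) / n ! := by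
    field_simp
  calc |poch b m * poch c m * poch d n / (poch e (m + n) * poch g n * m ! * n !) * x ^ m * y ^ n|
      = |poch b m / m !| * |poch c m / m !| * |poch d n / n !| * |(m + n)! / poch e (m + n)| *
          |n ! / poch g n| * ((m ! : ℝ) / (m + n)!) * (|x| ^ m * (|y| ^ n / n !)) := by
        rw [hsplit]
        simp only [abs_mul, abs_div, abs_pow, Nat.abs_cast]
        ring
    _ ≤ ((m : ℝ) + 1) ^ B * ((m : ℝ) + 1) ^ C * ((n : ℝ) + 1) ^ D *
          (Ce * (((m : ℝ) + 1) * ((n : ℝ) + 1)) ^ E) * (Cg * ((n : ℝ) + 1) ^ G) * 1 *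
          (|x| ^ m * (|y| ^ n / n !)) := by
        gcongr
        · exact abs_poch_div_factorial_le hb m
        · exact abs_poch_div_factorial_le hc m
        · exact abs_poch_div_factorial_le hd n
        · exact (he _).trans (by gcongr)
        · exact hg n
    _ = Ce * Cg * (((m : ℝ) + 1) ^ (B + C + E) * |x| ^ m) *
          (((n : ℝ) + 1) ^ (D + G + E) * |y| ^ n / n !) := by rw [mul_pow]; ring

/-- The double series defining `F^{0;2;1}_{1;0;1}[-: b,c; d; e: -; g; x,y]` converges
absolutely for every `x` with `|x| < 1` and every `y`, provided `e` and `g` are not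
nonpositive integers. -/
theorem F021_summable (b c d e g : ℝ)
    (he : ∀ k : ℕ, e ≠ -(k : ℝ)) (hg : ∀ k : ℕ, g ≠ -(k : ℝ))
    (x y : ℝ) (hx : |x| < 1) :
    Summable (fun mn : ℕ × ℕ =>
      |poch b mn.1 * poch c mn.1 * poch d mn.2 /
          (poch e (mn.1 + mn.2) * poch g mn.2 * mn.1.factorial * mn.2.factorial) *
          x ^ mn.1 * y ^ mn.2|) := by
  obtain ⟨Ce, E, hE⟩ := exists_abs_factorial_div_poch_le he
  obtain ⟨Cg, G, hG⟩ := exists_abs_factorial_div_poch_le hg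
  have hmajorant := ((summable_add_one_pow_mul_geometric (⌈|b|⌉₊ + ⌈|c|⌉₊ + E)
    (by rwa [abs_abs])).mul_of_nonneg
    (summable_add_one_pow_mul_pow_div_factorial (⌈|d|⌉₊ + G + E) (abs_nonneg y))
    (fun _ => by positivity) fun _ => by positivity).mul_left (Ce * Cg)
  refine hmajorant.of_nonneg_of_le (fun _ => abs_nonneg _) fun mn => ?_
  simpa only [mul_assoc] using
    abs_F021_summand_le (le_ceil |b|) (le_ceil |c|) (le_ceil |d|) hE hG mn.1 mn.2
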